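/- The knowledge modality is not definable through comprehension: there exist two epistemic models with meanings and pointed state-meaning pairs that agree on all formulas of the C-fragment (built from propositional variables, ¬, →, C_a), yet one satisfies K_a p and the other does not. Consequently, no formula of the C-fragment is semantically equivalent to K_a p. -/

import Mathlib

/-- An epistemic model with meanings. -/
structure EMM (Agent Var : Type) where
  W : Type
  rel : Agent → W → W → Prop
  equiv : ∀ a, Equivalence (rel a)
  M : W → Type
  nonempty : ∀ w, Nonempty (M w)
  val : (w : W) → Var → Set (M w)

/-- Formulas of the bimodal language. -/
inductive Form (Agent Var : Type) : Type where
  | var : Var → Form Agent Var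
  | neg : Form Agent Var → Form Agent Var
  | imp : Form Agent Var → Form Agent Var → Form Agent Var
  | K : Agent → Form Agent Var → Form Agent Var
  | C : Agent → Form Agent Var → Form Agent Var

variable {Agent Var : Type}

/-- Satisfaction relation. -/
def Sat (Mo : EMM Agent Var) : Form Agent Var → (w : Mo.W) → Mo.M w → Prop
  | .var p, w, m => m ∈ Mo.val w p
  | .neg φ, w, m => ¬ Sat Mo φ w m
  | .imp φ ψ, w, m => Sat Mo φ w m → Sat Mo ψ w m
  | .K a φ, w, _ => ∀ u, Mo.rel a w u → ∀ m' : Mo.M u, Sat Mo φ u m'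
  | .C a φ, w, _ => ∀ u, Mo.rel a w u → ∀ m' m'' : Mo.M u, Sat Mo φ u m' → Sat Mo φ u m''

/-- Membership in the C-fragment: no occurrence of the K modality. -/
def noK : Form Agent Var → Prop
  | .var _ => True
  | .neg φ => noK φ
  | .imp φ ψ => noK φ ∧ noK ψ
  | .K _ _ => False
  | .C _ φ => noK φ

/-! With a single meaning per state every formula `C a φ` holds vacuously, so the C-fragment
only sees the propositional valuation at the current state; `K a p` also sees the valuation at
the other states of the information cell. Two such models that agree at the evaluation point but
not at some accessible state therefore separate `K a p` from every formula of the C-fragment. -/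

namespace EMM

def ofValuation (W : Type) (v : W → Var → Prop) : EMM Agent Var where
  W := W
  rel := fun _ _ _ => True
  equiv := fun _ => ⟨fun _ => trivial, fun _ => trivial, fun _ _ => trivial⟩
  M := fun _ => Unit
  nonempty := fun _ => ⟨()⟩
  val := fun w p => Set.ofPred fun _ => v w p

end EMM

theorem sat_C_of_subsingleton (Mo : EMM Agent Var) (hM : ∀ w, Subsingleton (Mo.M w))
    (a : Agent) (φ : Form Agent Var) (w : Mo.W) (m : Mo.M w) : Sat Mo (.C a φ) w m :=
  fun u _ m' m'' h => Subsingleton.elim (h := hM u) m' m'' ▸ h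

theorem sat_iff_of_noK_of_subsingleton {Mo Mo' : EMM Agent Var}
    (hM : ∀ w, Subsingleton (Mo.M w)) (hM' : ∀ w, Subsingleton (Mo'.M w))
    {w : Mo.W} {m : Mo.M w} {w' : Mo'.W} {m' : Mo'.M w'}
    (hval : ∀ p, m ∈ Mo.val w p ↔ m' ∈ Mo'.val w' p) :
    ∀ φ : Form Agent Var, noK φ → (Sat Mo φ w m ↔ Sat Mo' φ w' m')
  | .var p, _ => hval p
  | .neg φ, hφ => not_congr (sat_iff_of_noK_of_subsingleton hM hM' hval φ hφ)
  | .imp φ ψ, ⟨hφ, hψ⟩ => imp_congr (sat_iff_of_noK_of_subsingleton hM hM' hval φ hφ)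
      (sat_iff_of_noK_of_subsingleton hM hM' hval ψ hψ)
  | .C a φ, _ => iff_of_true (sat_C_of_subsingleton Mo hM a φ w m)
      (sat_C_of_subsingleton Mo' hM' a φ w' m')

theorem sat_K_var_ofValuation_iff (W : Type) (v : W → Var → Prop) (a : Agent) (p : Var)
    (w : W) (m : Unit) :
    Sat (EMM.ofValuation (Agent := Agent) W v) (.K a (.var p)) w m ↔ ∀ u, v u p :=
  ⟨fun h u => h u trivial (), fun h u _ _ => h u⟩

theorem not_forall_sat_iff_of_separating {χ : Form Agent Var} {Mo Mo' : EMM Agent Var}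
    {w : Mo.W} {m : Mo.M w} {w' : Mo'.W} {m' : Mo'.M w'}
    (hagree : ∀ φ, noK φ → (Sat Mo φ w m ↔ Sat Mo' φ w' m'))
    (hMo : Sat Mo χ w m) (hMo' : ¬ Sat Mo' χ w' m') (ψ : Form Agent Var) (hψ : noK ψ) :
    ¬ ∀ (Mo : EMM Agent Var) (w : Mo.W) (m : Mo.M w), (Sat Mo ψ w m ↔ Sat Mo χ w m) :=
  fun hequiv => hMo' <| (hequiv Mo' w' m').mp <| (hagree ψ hψ).mp <| (hequiv Mo w m).mpr hMo

theorem stmt15 :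
    (∃ (Mo Mo' : EMM Unit Unit) (w : Mo.W) (m : Mo.M w) (w' : Mo'.W) (m' : Mo'.M w'),
      (∀ φ : Form Unit Unit, noK φ → (Sat Mo φ w m ↔ Sat Mo' φ w' m')) ∧
      Sat Mo (.K () (.var ())) w m ∧ ¬ Sat Mo' (.K () (.var ())) w' m') ∧
    (∀ ψ : Form Unit Unit, noK ψ →
      ¬ ∀ (Mo : EMM Unit Unit) (w : Mo.W) (m : Mo.M w),
          (Sat Mo ψ w m ↔ Sat Mo (.K () (.var ())) w m)) := by
  let left : EMM Unit Unit := .ofValuation Unit fun _ _ => True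
  let right : EMM Unit Unit := .ofValuation Bool fun w _ => w = true
  have hagree : ∀ φ : Form Unit Unit, noK φ → (Sat left φ () () ↔ Sat right φ true ()) :=
    sat_iff_of_noK_of_subsingleton (fun _ => inferInstanceAs (Subsingleton Unit))
      (fun _ => inferInstanceAs (Subsingleton Unit)) fun _ => iff_of_true trivial rfl
  have hleft : Sat left (.K () (.var ())) () () :=
    (sat_K_var_ofValuation_iff _ _ _ _ _ _).mpr fun _ => trivial
  have hright : ¬ Sat right (.K () (.var ())) true () := fun h =>
    Bool.false_ne_true ((sat_K_var_ofValuation_iff _ _ _ _ _ _).mp h false)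
  exact ⟨⟨left, right, (), (), true, (), hagree, hleft, hright⟩,
    not_forall_sat_iff_of_separating hagree hleft hright⟩
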